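/- Let V be a finite ground set, f : Finset V → ℝ a nonnegative submodular function, c ∈ [0,1], and p ∈ [0,1]^V. Let S be a random subset of V (given by any probability distribution μ on Finset V) such that for every element e ∈ V, the probability that e ∈ S equals c·p_e. Then E[f(S)] ≥ c·f⁻(p), where f⁻ is the Lovász extension of f. -/

import Mathlib

open MeasureTheory

/-- The Lovász extension of a set function `f`:
`f⁻(x) = ∫₀¹ f({e : x_e ≥ θ}) dθ`. -/
noncomputable def lovaszExt {V : Type*} [Fintype V] (f : Finset V → ℝ) (x : V → ℝ) : ℝ :=
  ∫ θ in (0:ℝ)..1, f (Finset.univ.filter (fun e => θ ≤ x e))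

/-!
Rank the elements by decreasing `p` (ties broken injectively) and let `g e` be the gain of
adding `e` to the set of elements ranked before it. Every level set `{e : θ ≤ p e}` is an
initial segment of this ranking, so `f` telescopes along it and `f⁻(p) = f ∅ + ∑ₑ p e * g e`.
For an arbitrary `S`, submodularity only lowers the telescoping sum:
`f S ≥ f ∅ + ∑_{e ∈ S} g e`. Taking expectations,
`E f(S) ≥ f ∅ + c ∑ₑ p e * g e = c f⁻(p) + (1 - c) f ∅ ≥ c f⁻(p)`.
-/

open Finset Function

def IsSubmodular {V : Type*} [DecidableEq V] (f : Finset V → ℝ) : Prop :=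
  ∀ A B : Finset V, A ⊆ B → ∀ e ∉ B, f (insert e A) - f A ≥ f (insert e B) - f B

section Ranking

variable {V ι : Type*} [Fintype V] [LinearOrder ι] {σ : V → ι}

def rankPrefix (σ : V → ι) (e : V) : Finset V := univ.filter fun x => σ x < σ e

def chainGain [DecidableEq V] (f : Finset V → ℝ) (σ : V → ι) (e : V) : ℝ :=
  f (insert e (rankPrefix σ e)) - f (rankPrefix σ e)

lemma notMem_rankPrefix_self (σ : V → ι) (e : V) : e ∉ rankPrefix σ e := by
  simp [rankPrefix]

lemma subset_rankPrefix (hσ : Injective σ) {a : V} {s : Finset V} (ha : a ∉ s)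
    (hs : ∀ x ∈ s, σ x ≤ σ a) : s ⊆ rankPrefix σ a := fun x hx =>
  mem_filter.mpr ⟨mem_univ x, (hs x hx).lt_of_ne (hσ.ne (ne_of_mem_of_not_mem hx ha))⟩

theorem IsSubmodular.add_sum_chainGain_le [DecidableEq V] {f : Finset V → ℝ}
    (hf : IsSubmodular f) (hσ : Injective σ) (S : Finset V) :
    f ∅ + ∑ e ∈ S, chainGain f σ e ≤ f S := by
  induction S using Finset.induction_on_max_value σ with
  | empty => simp
  | insert a s ha hs ih =>
    have hgain := hf s _ (subset_rankPrefix hσ ha hs) a (notMem_rankPrefix_self σ a)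
    rw [sum_insert ha, chainGain]
    linarith

theorem add_sum_chainGain_eq [DecidableEq V] (f : Finset V → ℝ) (hσ : Injective σ)
    {S : Finset V} (hS : ∀ e ∈ S, ∀ x, σ x < σ e → x ∈ S) :
    f ∅ + ∑ e ∈ S, chainGain f σ e = f S := by
  induction S using Finset.induction_on_max_value σ with
  | empty => simp
  | insert a s ha hs ih =>
    have hs_down : ∀ e ∈ s, ∀ x, σ x < σ e → x ∈ s := fun e he x hx =>
      (mem_insert.mp (hS e (mem_insert_of_mem he) x hx)).resolve_left
        fun hxa => (hx.trans_le (hs e he)).ne (congrArg σ hxa)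
    have hprefix : rankPrefix σ a = s := by
      refine (subset_rankPrefix hσ ha hs).antisymm' fun x hx => ?_
      have hxa : σ x < σ a := (mem_filter.mp hx).2
      exact (mem_insert.mp (hS a (mem_insert_self a s) x hxa)).resolve_left
        fun h => hxa.ne (congrArg σ h)
    have := ih hs_down
    rw [sum_insert ha, chainGain, hprefix]
    linarith

end Ranking

theorem intervalIntegral_indicator_Iic_const {r : ℝ} (hr : r ∈ Set.Icc (0:ℝ) 1) (d : ℝ) :
    ∫ θ in (0:ℝ)..1, (Set.Iic r).indicator (fun _ => d) θ = r * d := by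
  rw [intervalIntegral.integral_of_le zero_le_one, integral_indicator_const _ measurableSet_Iic,
    measureReal_restrict_apply measurableSet_Iic, Set.Iic_inter_Ioc_of_le hr.2,
    Real.volume_real_Ioc_of_le hr.1, sub_zero, smul_eq_mul]

theorem lovaszExt_eq_add_sum_chainGain {V ι : Type*} [Fintype V] [DecidableEq V]
    [LinearOrder ι] (f : Finset V → ℝ) {p : V → ℝ} (hp : ∀ e, p e ∈ Set.Icc (0:ℝ) 1)
    {σ : V → ι} (hσ : Injective σ) (hσp : ∀ a b, σ a < σ b → p b ≤ p a) :
    lovaszExt f p = f ∅ + ∑ e, p e * chainGain f σ e := by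
  have hlevel : ∀ θ, f (univ.filter fun e => θ ≤ p e)
      = f ∅ + ∑ e, (Set.Iic (p e)).indicator (fun _ => chainGain f σ e) θ := by
    intro θ
    rw [← add_sum_chainGain_eq f hσ, sum_filter]
    · simp only [Set.indicator, Set.mem_Iic]
    · simp only [mem_filter, mem_univ, true_and]
      exact fun e he x hx => he.trans (hσp x e hx)
  have hint : ∀ e ∈ (univ : Finset V), IntervalIntegrable
      ((Set.Iic (p e)).indicator fun _ => chainGain f σ e) volume 0 1 := fun e _ =>
    intervalIntegrable_iff.mpr (intervalIntegrable_const.def'.indicator measurableSet_Iic)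
  have hsum : IntervalIntegrable
      (fun θ => ∑ e, (Set.Iic (p e)).indicator (fun _ => chainGain f σ e) θ) volume 0 1 := by
    simpa only [Finset.sum_fn] using IntervalIntegrable.sum univ hint
  simp_rw [lovaszExt, hlevel]
  rw [intervalIntegral.integral_add intervalIntegrable_const hsum,
    intervalIntegral.integral_finsetSum hint]
  simp [intervalIntegral_indicator_Iic_const (hp _)]

theorem exists_injective_ranking_by_decreasing {V : Type*} [Countable V] (p : V → ℝ) :
    ∃ σ : V → ℝᵒᵈ ×ₗ ℕ, Injective σ ∧ ∀ a b, σ a < σ b → p b ≤ p a := by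
  obtain ⟨g, hg⟩ := Countable.exists_injective_nat V
  refine ⟨fun e => toLex (OrderDual.toDual (p e), g e), fun a b hab => hg ?_, fun a b hab => ?_⟩
  · exact congrArg Prod.snd (toLex.injective hab)
  · exact (Prod.Lex.toLex_lt_toLex'.mp hab).1

theorem add_sum_marginal_mul_le_expectation {V : Type*} [Fintype V] [DecidableEq V]
    {f : Finset V → ℝ} {w : V → ℝ} (hfw : ∀ S, f ∅ + ∑ e ∈ S, w e ≤ f S)
    {μ : Finset V → ℝ} (hμ0 : ∀ S, 0 ≤ μ S) (hμ1 : ∑ S, μ S = 1) :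
    f ∅ + ∑ e, (∑ S, if e ∈ S then μ S else 0) * w e ≤ ∑ S, μ S * f S := by
  have hswap : ∑ e, (∑ S, if e ∈ S then μ S else 0) * w e = ∑ S, μ S * ∑ e ∈ S, w e := by
    simp_rw [sum_mul, ite_mul, zero_mul, mul_sum]
    rw [sum_comm]
    simp [sum_ite_mem]
  calc f ∅ + ∑ e, (∑ S, if e ∈ S then μ S else 0) * w e
      = ∑ S, μ S * (f ∅ + ∑ e ∈ S, w e) := by
        rw [hswap]
        simp_rw [mul_add, sum_add_distrib, ← sum_mul, hμ1, one_mul]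
    _ ≤ ∑ S, μ S * f S := sum_le_sum fun S _ => mul_le_mul_of_nonneg_left (hfw S) (hμ0 S)

/-- if `S` is a random set with `Pr[e ∈ S] = c·p_e` for every `e`, then
`E[f(S)] ≥ c·f⁻(p)` for any nonnegative submodular `f`. -/
theorem stmt3 {V : Type*} [Fintype V] [DecidableEq V]
    (f : Finset V → ℝ)
    (hsub : ∀ A B : Finset V, A ⊆ B → ∀ e ∉ B,
      f (insert e A) - f A ≥ f (insert e B) - f B)
    (hnn : ∀ S : Finset V, 0 ≤ f S)
    (c : ℝ) (hc : c ∈ Set.Icc (0:ℝ) 1)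
    (p : V → ℝ) (hp : ∀ e, p e ∈ Set.Icc (0:ℝ) 1)
    (μ : Finset V → ℝ)
    (hμ0 : ∀ S : Finset V, 0 ≤ μ S)
    (hμ1 : ∑ S : Finset V, μ S = 1)
    (hmarg : ∀ e : V, ∑ S : Finset V, (if e ∈ S then μ S else 0) = c * p e) :
    ∑ S : Finset V, μ S * f S ≥ c * lovaszExt f p := by
  obtain ⟨σ, hσ, hσp⟩ := exists_injective_ranking_by_decreasing p
  have hexp := add_sum_marginal_mul_le_expectation
    (IsSubmodular.add_sum_chainGain_le (f := f) hsub hσ) hμ0 hμ1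
  simp_rw [hmarg, mul_assoc, ← mul_sum] at hexp
  rw [lovaszExt_eq_add_sum_chainGain f hp hσ hσp, mul_add]
  have hcf : c * f ∅ ≤ f ∅ := mul_le_of_le_one_left (hnn ∅) hc.2
  linarith
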